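/- Over the alphabet A = {a,b} (a ≠ b), the set {(aˢbaˢ, aˢbaˢ, aˢba^{2s}baˢ) : s > 0} ⊆ U is not the behavior of any spliffer with finitely many states (in particular, it is not the behavior of any deterministic splitter). -/

import Mathlib

/-!
Pumping. A spliffer with `n` states producing `(aˢbaˢ, aˢbaˢ, aˢba²ˢbaˢ)` for `s > 2ⁿ` passes
through a loop while it writes the first `s` letters of the output tape, which are all `a`.
Every generator writes its letter to the output and to exactly one input tape, so the loop
consumes only `a`s, and at least one of them, on some input tape, all before that tape's `b`.
Cutting out the loop leaves an accepted triple whose input tape is `aʳbaˢ` with `r < s`, which is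
not of the form `aᵗbaᵗ`.
-/

/-- Words over the alphabet `A`, i.e. elements of the free monoid `A*`. -/
abbrev Word (A : Type) := List A

/-- The generating set `G = {(a,ε,a) : a ∈ A} ∪ {(ε,a,a) : a ∈ A}` of the
Shuffling Monoid. -/
def genG (A : Type) : Set (Word A × Word A × Word A) :=
  {g | ∃ a : A, g = ([a], [], [a]) ∨ g = ([], [a], [a])}

/-- Componentwise product (concatenation) of a list of triples of words. -/
def prodTriple {A : Type} (ls : List (Word A × Word A × Word A)) :
    Word A × Word A × Word A :=
  ((ls.map fun l => l.1).flatten, (ls.map fun l => l.2.1).flatten,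
    (ls.map fun l => l.2.2).flatten)

/-- The Shuffling Monoid `U`: the submonoid of `A* × A* × A*` generated by `G`,
described as the set of all products of finite sequences of generators. -/
def shuffleU (A : Type) : Set (Word A × Word A × Word A) :=
  {m | ∃ ls : List (Word A × Word A × Word A), (∀ l ∈ ls, l ∈ genG A) ∧ prodTriple ls = m}

/-- A spliffer (equivalently, splitter) over `A`: a finite automaton whose
transitions are labeled by elements of `G`. -/
structure Spliffer (A : Type) where
  Q : Type
  finQ : Finite Q
  E : Q → (Word A × Word A × Word A) → Q → Prop
  I : Set Q
  T : Set Q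
  labels_mem : ∀ {q l q'}, E q l q' → l ∈ genG A

/-- Paths in a spliffer, recording the sequence of labels. -/
inductive Spliffer.Path {A : Type} (S : Spliffer A) :
    S.Q → List (Word A × Word A × Word A) → S.Q → Prop
  | nil (q : S.Q) : Spliffer.Path S q [] q
  | cons {q q' q'' : S.Q} {l : Word A × Word A × Word A}
      {ls : List (Word A × Word A × Word A)} :
      S.E q l q' → Spliffer.Path S q' ls q'' → Spliffer.Path S q (l :: ls) q''

/-- The behavior `|S|` of a spliffer: products of the label sequences of all
successful runs. -/
def Spliffer.behavior {A : Type} (S : Spliffer A) : Set (Word A × Word A × Word A) :=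
  {m | ∃ q ∈ S.I, ∃ q' ∈ S.T, ∃ ls, S.Path q ls q' ∧ prodTriple ls = m}

/-- A splitter is deterministic if it has a single initial state, for every state
and input letter there is at most one outgoing transition reading that letter,
and all transitions leaving a given state write to the same tape. -/
def Spliffer.Deterministic {A : Type} (S : Spliffer A) : Prop :=
  (∃! i, i ∈ S.I) ∧
  (∀ ⦃q l₁ q₁ l₂ q₂⦄, S.E q l₁ q₁ → S.E q l₂ q₂ → l₁.2.2 = l₂.2.2 → l₁ = l₂ ∧ q₁ = q₂) ∧
  (∀ ⦃q l₁ q₁ l₂ q₂⦄, S.E q l₁ q₁ → S.E q l₂ q₂ →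
    (l₁.1 = [] ∧ l₂.1 = []) ∨ (l₁.2.1 = [] ∧ l₂.2.1 = []))

/-- The set `L₁ = {(aⁿbaᵐ, aᵐbaˢ, aⁿba^{2m}baˢ) : n,m,s > 0}`. -/
def setL1 {A : Type} (a b : A) : Set (Word A × Word A × Word A) :=
  {x | ∃ n m s : ℕ, 0 < n ∧ 0 < m ∧ 0 < s ∧
    x = (List.replicate n a ++ [b] ++ List.replicate m a,
         List.replicate m a ++ [b] ++ List.replicate s a,
         List.replicate n a ++ [b] ++ List.replicate (2 * m) a ++ [b] ++
           List.replicate s a)}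

/-- The set `L₂ = {(aⁱbaʲ, aᵏbaⁱ, aᵏba^{2i}baʲ) : i,j,k > 0}`. -/
def setL2 {A : Type} (a b : A) : Set (Word A × Word A × Word A) :=
  {x | ∃ i j k : ℕ, 0 < i ∧ 0 < j ∧ 0 < k ∧
    x = (List.replicate i a ++ [b] ++ List.replicate j a,
         List.replicate k a ++ [b] ++ List.replicate i a,
         List.replicate k a ++ [b] ++ List.replicate (2 * i) a ++ [b] ++
           List.replicate j a)}

/-- The set `{(aˢbaˢ, aˢbaˢ, aˢba^{2s}baˢ) : s > 0}`. -/
def setLcap {A : Type} (a b : A) : Set (Word A × Word A × Word A) :=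
  {x | ∃ s : ℕ, 0 < s ∧
    x = (List.replicate s a ++ [b] ++ List.replicate s a,
         List.replicate s a ++ [b] ++ List.replicate s a,
         List.replicate s a ++ [b] ++ List.replicate (2 * s) a ++ [b] ++
           List.replicate s a)}

variable {A : Type}

theorem prodTriple_append (u v : List (Word A × Word A × Word A)) :
    prodTriple (u ++ v) = ((prodTriple u).1 ++ (prodTriple v).1,
      (prodTriple u).2.1 ++ (prodTriple v).2.1, (prodTriple u).2.2 ++ (prodTriple v).2.2) := by
  simp [prodTriple]

theorem prodTriple_cons (l : Word A × Word A × Word A) (ls : List (Word A × Word A × Word A)) :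
    prodTriple (l :: ls) = (l.1 ++ (prodTriple ls).1, l.2.1 ++ (prodTriple ls).2.1,
      l.2.2 ++ (prodTriple ls).2.2) := by
  simp [prodTriple]

theorem length_prodTriple_snd_snd {ls : List (Word A × Word A × Word A)}
    (h : ∀ l ∈ ls, l ∈ genG A) : (prodTriple ls).2.2.length = ls.length := by
  induction ls with
  | nil => rfl
  | cons l ls ih =>
    obtain ⟨c, rfl | rfl⟩ := h l List.mem_cons_self <;>
      simp [prodTriple_cons, ih fun l hl => h l (List.mem_cons_of_mem _ hl)]

theorem perm_prodTriple {ls : List (Word A × Word A × Word A)}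
    (h : ∀ l ∈ ls, l ∈ genG A) :
    ((prodTriple ls).1 ++ (prodTriple ls).2.1).Perm (prodTriple ls).2.2 := by
  induction ls with
  | nil => rfl
  | cons l ls ih =>
    have ih := ih fun l hl => h l (List.mem_cons_of_mem _ hl)
    obtain ⟨c, rfl | rfl⟩ := h l List.mem_cons_self
    · simpa [prodTriple_cons] using ih
    · simpa [prodTriple_cons] using List.perm_middle.trans (ih.cons c)

def lcapTriple (a b : A) (s : ℕ) : Word A × Word A × Word A :=
  (List.replicate s a ++ [b] ++ List.replicate s a,
    List.replicate s a ++ [b] ++ List.replicate s a,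
    List.replicate s a ++ [b] ++ List.replicate (2 * s) a ++ [b] ++ List.replicate s a)

theorem mem_setLcap {a b : A} {x : Word A × Word A × Word A} :
    x ∈ setLcap a b ↔ ∃ s, 0 < s ∧ x = lcapTriple a b s :=
  Iff.rfl

theorem eq_replicate_of_append_eq_replicate_append {a : A} {u v w : Word A} {s : ℕ}
    (h : u ++ v = List.replicate s a ++ w) (hu : u.length ≤ s) :
    u = List.replicate u.length a := by
  have := congrArg (List.take u.length) h
  rwa [List.take_left' rfl, List.take_append_of_le_length (by simpa using hu),
    List.take_replicate, min_eq_left hu] at this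

theorem eq_nil_of_replicate_append_eq {a b : A} (hab : a ≠ b) {u v w : Word A} {n s t : ℕ}
    (huv : u ++ v = List.replicate n a)
    (h : u ++ v ++ w = List.replicate s a ++ [b] ++ List.replicate s a)
    (h' : u ++ w = List.replicate t a ++ [b] ++ List.replicate t a) : v = [] := by
  classical
  -- `b` sits in the middle of `aˢbaˢ`, so its position and the length determine each other
  obtain ⟨-, hu, hv⟩ := List.append_eq_replicate_iff.1 huv
  have hb : ∀ k, b ∉ List.replicate k a := fun k hk => hab (List.eq_of_mem_replicate hk).symm
  have hidx := congrArg (List.idxOf b) h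
  have hidx' := congrArg (List.idxOf b) h'
  have hlen := congrArg List.length h
  have hlen' := congrArg List.length h'
  rw [hu] at hidx hidx' hlen hlen'
  rw [hv] at hidx hlen
  simp only [List.append_assoc, List.idxOf_append_of_notMem (hb _), List.singleton_append,
    List.idxOf_cons_self, List.length_append, List.length_replicate, List.length_cons]
    at hidx hidx' hlen hlen'
  exact List.eq_nil_of_length_eq_zero (by omega)

theorem eq_nil_of_pump_down {a b : A} (hab : a ≠ b) {x y z : List (Word A × Word A × Word A)}
    (hgen : ∀ l ∈ x ++ y ++ z, l ∈ genG A) {s t : ℕ}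
    (hxyz : prodTriple (x ++ y ++ z) = lcapTriple a b s)
    (hxz : prodTriple (x ++ z) = lcapTriple a b t) (hlen : x.length + y.length ≤ s) :
    y = [] := by
  have hgen_xy : ∀ l ∈ x ++ y, l ∈ genG A := fun l hl => hgen l (List.mem_append_left _ hl)
  have hgen_y : ∀ l ∈ y, l ∈ genG A := fun l hl => hgen_xy l (List.mem_append_right _ hl)
  have hout : (prodTriple (x ++ y)).2.2 = List.replicate (x.length + y.length) a := by
    have h := congrArg (·.2.2) hxyz
    rw [prodTriple_append (x ++ y)] at h
    simp only [lcapTriple, List.append_assoc] at h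
    have hlen_xy : (prodTriple (x ++ y)).2.2.length = x.length + y.length := by
      rw [length_prodTriple_snd_snd hgen_xy, List.length_append]
    rw [← hlen_xy]
    exact eq_replicate_of_append_eq_replicate_append h (hlen_xy ▸ hlen)
  have hin := perm_prodTriple hgen_xy
  rw [hout, List.perm_replicate, List.append_eq_replicate_iff] at hin
  obtain ⟨-, hin₁, hin₂⟩ := hin
  simp only [prodTriple_append, lcapTriple, Prod.mk.injEq] at hin₁ hin₂ hxyz hxz
  have hy₁ := eq_nil_of_replicate_append_eq hab hin₁ hxyz.1 hxz.1
  have hy₂ := eq_nil_of_replicate_append_eq hab hin₂ hxyz.2.1 hxz.2.1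
  have hy := (perm_prodTriple hgen_y).length_eq
  rw [hy₁, hy₂, length_prodTriple_snd_snd hgen_y] at hy
  exact List.eq_nil_of_length_eq_zero (by simpa using hy.symm)

namespace Spliffer

def toNFA (S : Spliffer A) : NFA (Word A × Word A × Word A) S.Q where
  step q l := {q' | S.E q l q'}
  start := S.I
  accept := S.T

theorem path_iff_nonempty_toNFA_path {S : Spliffer A} {q q' : S.Q}
    {ls : List (Word A × Word A × Word A)} : S.Path q ls q' ↔ Nonempty (S.toNFA.Path q q' ls) := by
  constructor
  · intro h
    induction h with
    | nil q => exact ⟨.nil q⟩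
    | cons e _ ih => exact ih.map (.cons _ _ _ _ _ e)
  · rintro ⟨p⟩
    induction p with
    | nil q => exact .nil q
    | cons _ _ _ _ _ e _ ih => exact .cons e ih

theorem behavior_eq_image_accepts (S : Spliffer A) :
    S.behavior = prodTriple '' S.toNFA.accepts := by
  ext m
  constructor
  · rintro ⟨q, hq, q', hq', ls, hp, rfl⟩
    exact ⟨ls, NFA.accepts_iff_exists_path.2 ⟨q, hq, q', hq', path_iff_nonempty_toNFA_path.1 hp⟩,
      rfl⟩
  · rintro ⟨ls, hls, rfl⟩
    obtain ⟨q, hq, q', hq', hp⟩ := NFA.accepts_iff_exists_path.1 hls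
    exact ⟨q, hq, q', hq', ls, path_iff_nonempty_toNFA_path.2 hp, rfl⟩

theorem Path.mem_genG {S : Spliffer A} {q q' : S.Q} {ls : List (Word A × Word A × Word A)}
    (h : S.Path q ls q') : ∀ l ∈ ls, l ∈ genG A := by
  induction h with
  | nil => simp
  | cons e _ ih => exact List.forall_mem_cons.2 ⟨S.labels_mem e, ih⟩

theorem mem_genG_of_mem_accepts {S : Spliffer A} {ls : List (Word A × Word A × Word A)}
    (h : ls ∈ S.toNFA.accepts) : ∀ l ∈ ls, l ∈ genG A := by
  obtain ⟨_, -, _, -, hp⟩ := NFA.accepts_iff_exists_path.1 h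
  exact (path_iff_nonempty_toNFA_path.2 hp).mem_genG

end Spliffer

theorem Lcap_not_a_spliffer_behavior_general {A : Type} (a b : A) (hab : a ≠ b) :
    ¬ ∃ S : Spliffer A, S.behavior = setLcap a b := by
  rintro ⟨S, hS⟩
  have := S.finQ
  have := Fintype.ofFinite S.Q
  obtain ⟨s, hs⟩ : ∃ s, Fintype.card (Set S.Q) < s := ⟨_, lt_add_one _⟩
  rw [S.behavior_eq_image_accepts] at hS
  obtain ⟨ls, hacc, hls⟩ : lcapTriple a b s ∈ prodTriple '' S.toNFA.accepts :=
    hS ▸ ⟨s, by omega, rfl⟩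
  have hgen := S.mem_genG_of_mem_accepts hacc
  have hlen : s ≤ ls.length := by
    rw [← length_prodTriple_snd_snd hgen, hls]
    simp only [lcapTriple, List.length_append, List.length_replicate]
    omega
  obtain ⟨x, y, z, rfl, hxy, hy, hpump⟩ := S.toNFA.pumping_lemma hacc (by omega)
  have hx : x ∈ ({x} : Language _) * KStar.kstar {y} := by
    simpa using Language.append_mem_mul (l := {x}) rfl (Language.nil_mem_kstar {y})
  have hxz : x ++ z ∈ S.toNFA.accepts := hpump (Language.append_mem_mul hx rfl)
  obtain ⟨t, -, ht⟩ := mem_setLcap.1 (hS ▸ ⟨_, hxz, rfl⟩ : prodTriple (x ++ z) ∈ setLcap a b)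
  exact hy (eq_nil_of_pump_down hab hgen hls ht (by omega))

/-- over `A = {a,b}`, the set `{(aˢbaˢ, aˢbaˢ, aˢba^{2s}baˢ) : s > 0}`
is not the behavior of any spliffer with finitely many states. -/
theorem Lcap_not_a_spliffer_behavior {A : Type} (a b : A) (hab : a ≠ b)
    (hA : ∀ x : A, x = a ∨ x = b) :
    ¬ ∃ S : Spliffer A, S.behavior = setLcap a b :=
  Lcap_not_a_spliffer_behavior_general a b hab
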